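/- arXiv:2512.24285 — 3 statements merged into one kernel-verified Lean document; each statement's English description precedes it below -/
import Mathlib

section
/- Let B ∈ ℂ^{m×n}, W ∈ ℂ^{n×m}, let k be a natural number with k = ind(BW), let H be the Moore–Penrose inverse of B, and let X be a minimal rank W-weighted weak Drazin inverse of B. Then Y = H·B·W·X·W is the unique matrix Y ∈ ℂ^{n×m} such that B·Y is idempotent with col(B·Y) = col((B·W)^k) and N(B·Y) = N(X·W), and col(Y) ⊆ col(B^*). -/
/-!
Put `P = BW`, `S = XW` and `Y₀ = HBWXW`. From `S P^(k+1) = P^k` and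
`rank S ≤ rank X = rank P^k`, the column space of `S` is that of `P^k`, so `S = P^k T` and hence
`S P S = S P^(k+1) T = S`. Therefore `B Y₀ = P S` is an idempotent with column space `col(P^k)`
and null space `N(S)`, and an idempotent is determined by these two spaces. Since `H B` is the
orthogonal projector onto `col(Bᴴ)`, a matrix `Y` with `col(Y) ⊆ col(Bᴴ)` is recovered from
`B Y` as `Y = H (B Y)`.
-/

open Matrix

/-- The index of a square complex matrix: the least `j` with `rank (M^j) = rank (M^(j+1))`. -/
noncomputable def matIndex {p : ℕ} (M : Matrix (Fin p) (Fin p) ℂ) : ℕ :=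
  sInf {j : ℕ | (M ^ j).rank = (M ^ (j + 1)).rank}

/-- The column space of a complex matrix: the range of `v ↦ M *ᵥ v`. -/
noncomputable def colSpace {a b : ℕ} (M : Matrix (Fin a) (Fin b) ℂ) :
    Submodule ℂ (Fin a → ℂ) :=
  LinearMap.range M.mulVecLin

/-- The null space of a complex matrix: the kernel of `v ↦ M *ᵥ v`. -/
noncomputable def nullSpace {a b : ℕ} (M : Matrix (Fin a) (Fin b) ℂ) :
    Submodule ℂ (Fin b → ℂ) :=
  LinearMap.ker M.mulVecLin

section ColumnSpace

variable {a b c : ℕ}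

lemma colSpace_mul_le (A : Matrix (Fin a) (Fin b) ℂ) (C : Matrix (Fin b) (Fin c) ℂ) :
    colSpace (A * C) ≤ colSpace A := by
  rw [colSpace, colSpace, mulVecLin_mul]
  exact LinearMap.range_comp_le_range _ _

lemma nullSpace_le_mul (A : Matrix (Fin a) (Fin b) ℂ) (C : Matrix (Fin b) (Fin c) ℂ) :
    nullSpace C ≤ nullSpace (A * C) := by
  rw [nullSpace, nullSpace, mulVecLin_mul]
  exact LinearMap.ker_le_ker_comp _ _

lemma colSpace_eq_of_le_of_rank_le {M : Matrix (Fin a) (Fin b) ℂ} {N : Matrix (Fin a) (Fin c) ℂ}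
    (h : colSpace M ≤ colSpace N) (hr : N.rank ≤ M.rank) : colSpace M = colSpace N :=
  Submodule.eq_of_le_of_finrank_le h hr

lemma exists_eq_mul_of_colSpace_le {M : Matrix (Fin a) (Fin b) ℂ} {A : Matrix (Fin a) (Fin c) ℂ}
    (h : colSpace M ≤ colSpace A) : ∃ T : Matrix (Fin c) (Fin b) ℂ, M = A * T := by
  choose v hv using fun j => h ⟨Pi.single j 1, rfl⟩
  refine ⟨(of v)ᵀ, ?_⟩
  ext i j
  simpa [mul_apply, mulVec, dotProduct, Pi.single_apply] using (congrFun (hv j) i).symm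

lemma eq_of_isIdempotentElem_of_colSpace_eq_of_nullSpace_eq {E F : Matrix (Fin a) (Fin a) ℂ}
    (hE : IsIdempotentElem E) (hF : IsIdempotentElem F)
    (hcol : colSpace E = colSpace F) (hnull : nullSpace E = nullSpace F) : E = F :=
  toLinAlgEquiv'.injective <|
    LinearMap.IsIdempotentElem.ext (hE.map toLinAlgEquiv') (hF.map toLinAlgEquiv') ⟨hcol, hnull⟩

end ColumnSpace

section WeakDrazin

variable {m k : ℕ} {P S : Matrix (Fin m) (Fin m) ℂ}

lemma colSpace_eq_pow_of_mul_pow_succ_eq (hSP : S * P ^ (k + 1) = P ^ k)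
    (hrank : S.rank ≤ (P ^ k).rank) : colSpace S = colSpace (P ^ k) :=
  (colSpace_eq_of_le_of_rank_le (hSP ▸ colSpace_mul_le S _) hrank).symm

lemma mul_mul_eq_self_of_mul_pow_succ_eq (hSP : S * P ^ (k + 1) = P ^ k)
    (hrank : S.rank ≤ (P ^ k).rank) : S * P * S = S := by
  obtain ⟨T, hT⟩ :=
    exists_eq_mul_of_colSpace_le (colSpace_eq_pow_of_mul_pow_succ_eq hSP hrank).le
  calc S * P * S = S * (P * P ^ k) * T := by nth_rw 2 [hT]; simp only [Matrix.mul_assoc]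
    _ = S := by rw [← pow_succ', hSP, hT]

lemma isIdempotentElem_mul_of_mul_mul_eq_self (hSPS : S * P * S = S) :
    IsIdempotentElem (P * S) := by
  rw [IsIdempotentElem, Matrix.mul_assoc, ← Matrix.mul_assoc S, hSPS]

lemma nullSpace_mul_eq_of_mul_mul_eq_self (hSPS : S * P * S = S) :
    nullSpace (P * S) = nullSpace S := by
  refine le_antisymm ?_ (nullSpace_le_mul P S)
  calc nullSpace (P * S) ≤ nullSpace (S * (P * S)) := nullSpace_le_mul S (P * S)
    _ = nullSpace S := by rw [← Matrix.mul_assoc, hSPS]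

lemma colSpace_mul_eq_pow_of_mul_pow_succ_eq (hSP : S * P ^ (k + 1) = P ^ k)
    (hrank : S.rank ≤ (P ^ k).rank) : colSpace (P * S) = colSpace (P ^ k) := by
  obtain ⟨T, hT⟩ :=
    exists_eq_mul_of_colSpace_le (colSpace_eq_pow_of_mul_pow_succ_eq hSP hrank).le
  have hle : colSpace (P * S) ≤ colSpace (P ^ k) := by
    rw [hT, ← Matrix.mul_assoc, ← pow_succ', pow_succ, Matrix.mul_assoc]
    exact colSpace_mul_le _ _
  refine colSpace_eq_of_le_of_rank_le hle ?_
  calc (P ^ k).rank = (S * P ^ (k + 1)).rank := by rw [hSP]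
    _ ≤ S.rank := rank_mul_le_left _ _
    _ = (S * (P * S)).rank := by
      rw [← Matrix.mul_assoc, mul_mul_eq_self_of_mul_pow_succ_eq hSP hrank]
    _ ≤ (P * S).rank := rank_mul_le_right _ _

end WeakDrazin

section MoorePenrose

variable {m n : ℕ} {B : Matrix (Fin m) (Fin n) ℂ} {H : Matrix (Fin n) (Fin m) ℂ}

lemma colSpace_mul_le_conjTranspose {p : ℕ} (hHB : (H * B)ᴴ = H * B)
    (M : Matrix (Fin n) (Fin p) ℂ) : colSpace (H * B * M) ≤ colSpace Bᴴ := by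
  rw [← hHB, conjTranspose_mul, Matrix.mul_assoc]
  exact colSpace_mul_le _ _

lemma mul_mul_eq_of_colSpace_le_conjTranspose {p : ℕ} (hBHB : B * H * B = B)
    (hHB : (H * B)ᴴ = H * B) {Y : Matrix (Fin n) (Fin p) ℂ}
    (hY : colSpace Y ≤ colSpace Bᴴ) :
    H * B * Y = Y := by
  obtain ⟨T, rfl⟩ := exists_eq_mul_of_colSpace_le hY
  rw [← Matrix.mul_assoc, ← hHB, ← conjTranspose_mul, ← Matrix.mul_assoc, hBHB]

end MoorePenrose

theorem weighted_weak_MPD_unique_projector_general {m n : ℕ}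
    (B : Matrix (Fin m) (Fin n) ℂ) (W : Matrix (Fin n) (Fin m) ℂ)
    (k : ℕ)
    (H : Matrix (Fin n) (Fin m) ℂ)
    (hH1 : B * H * B = B)
    (hH4 : (H * B)ᴴ = H * B)
    (X : Matrix (Fin m) (Fin n) ℂ)
    (hX1 : X * W * (B * W) ^ (k + 1) = (B * W) ^ k)
    (hX2 : X.rank = ((B * W) ^ k).rank) :
    ∀ Y : Matrix (Fin n) (Fin m) ℂ,
      ((B * Y) * (B * Y) = B * Y ∧
        colSpace (B * Y) = colSpace ((B * W) ^ k) ∧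
        nullSpace (B * Y) = nullSpace (X * W) ∧
        colSpace Y ≤ colSpace Bᴴ) ↔
      Y = H * B * W * X * W := by
  have hrank : (X * W).rank ≤ ((B * W) ^ k).rank := (rank_mul_le_left X W).trans hX2.le
  have hSPS := mul_mul_eq_self_of_mul_pow_succ_eq hX1 hrank
  have hcol := colSpace_mul_eq_pow_of_mul_pow_succ_eq hX1 hrank
  have hnull := nullSpace_mul_eq_of_mul_mul_eq_self hSPS
  have hY₀ : colSpace (H * B * W * X * W) ≤ colSpace Bᴴ := by
    simpa only [Matrix.mul_assoc] using colSpace_mul_le_conjTranspose hH4 (W * X * W)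
  have hBY₀ : B * (H * B * W * X * W) = B * W * (X * W) := by
    simp only [← Matrix.mul_assoc, hH1]
  intro Y
  constructor
  · rintro ⟨hidem, hcolY, hnullY, hY⟩
    have hBY : B * Y = B * (H * B * W * X * W) :=
      hBY₀ ▸ eq_of_isIdempotentElem_of_colSpace_eq_of_nullSpace_eq hidem
        (isIdempotentElem_mul_of_mul_mul_eq_self hSPS) (hcolY.trans hcol.symm)
        (hnullY.trans hnull.symm)
    calc Y = H * B * Y := (mul_mul_eq_of_colSpace_le_conjTranspose hH1 hH4 hY).symm
      _ = H * B * (H * B * W * X * W) := by rw [Matrix.mul_assoc H, hBY, ← Matrix.mul_assoc]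
      _ = H * B * W * X * W := mul_mul_eq_of_colSpace_le_conjTranspose hH1 hH4 hY₀
  · rintro rfl
    rw [hBY₀]
    exact ⟨isIdempotentElem_mul_of_mul_mul_eq_self hSPS, hcol, hnull, hY₀⟩

/-- **Theorem 3.8.** `Y = H·B·W·X·W` is the unique matrix such that `B·Y` is the projector
`P_{col((BW)^k), N(XW)}` and `col(Y) ⊆ col(Bᴴ)`. -/
theorem weighted_weak_MPD_unique_projector {m n : ℕ}
    (B : Matrix (Fin m) (Fin n) ℂ) (W : Matrix (Fin n) (Fin m) ℂ)
    (k : ℕ) (hk : k = matIndex (B * W))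
    (H : Matrix (Fin n) (Fin m) ℂ)
    (hH1 : B * H * B = B) (hH2 : H * B * H = H)
    (hH3 : (B * H)ᴴ = B * H) (hH4 : (H * B)ᴴ = H * B)
    (X : Matrix (Fin m) (Fin n) ℂ)
    (hX1 : X * W * (B * W) ^ (k + 1) = (B * W) ^ k)
    (hX2 : X.rank = ((B * W) ^ k).rank) :
    ∀ Y : Matrix (Fin n) (Fin m) ℂ,
      ((B * Y) * (B * Y) = B * Y ∧
        colSpace (B * Y) = colSpace ((B * W) ^ k) ∧
        nullSpace (B * Y) = nullSpace (X * W) ∧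
        colSpace Y ≤ colSpace Bᴴ) ↔
      Y = H * B * W * X * W :=
  weighted_weak_MPD_unique_projector_general B W k H hH1 hH4 X hX1 hX2
end

section
/- Let B ∈ ℂ^{m×n}, W ∈ ℂ^{n×m}, let k be a natural number with k = ind(WB), let H be the Moore–Penrose inverse of B, let G be the Moore–Penrose inverse of (W·B)^k, let Z be a minimal rank W-weighted right weak Drazin inverse of B, and let Q ∈ ℂ^{n×m} satisfy B·Q·B = B. Then the following are equivalent: (i) W·Z·W·B·H = W·Z·W·B·Q; (ii) (W·B)^{k+1}·Q = (W·B)^{k+1}·H; (iii) N((W·B)^{k+1}·Q) = N((W·B)^{k+1}·H); (iv) N((W·B)^{k+1}·Q) ⊆ N((W·B)^{k+1}·H); (v) there exists U ∈ ℂ^{n×m} such that Q = H + (I − G·(W·B)^k)·U. -/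
open Matrix

/-!
Write `A = W * B`. Since `k` is the index, `N(A^k) = N(A^(k+1))`, and `W (B W)^(k+1) Z = A^k`
together with `rank Z = rank A^k` forces `N(Z) = N(A^k)`; hence `Z G A^k = Z`, so `W Z W B X`
factors through `A^(k+1) X`, while `W (B W)^k B` recovers `A^(k+1) X` from `W Z W B X`: this
gives (i) ⇔ (ii). As `B Q B = B = B H B`, both `A^(k+1) Q` and `A^(k+1) H` have the rank of
`A^(k+1)`, so an inclusion of their null spaces is an equality; and since `H B H = H`, the
inclusion `N(H) ⊆ N(A^(k+1) Q)` gives `A^(k+1) Q = A^(k+1) Q B H = A^(k+1) H`. Finally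
`A^(k+1) (Q - H) = 0` iff `A^k (Q - H) = 0` iff `Q - H = (1 - G A^k) (Q - H)`.
-/

lemma rank_mul_eq_of_mul_mul_eq {R : Type*} [CommSemiring R] [StrongRankCondition R]
    {l m n : Type*} [Fintype m] [Fintype n] {P : Matrix l m R} {Q : Matrix m n R}
    {B : Matrix n m R} (h : P * Q * B = P) : (P * Q).rank = P.rank :=
  le_antisymm (rank_mul_le_left P Q) <| calc
    P.rank = (P * Q * B).rank := by rw [h]
    _ ≤ (P * Q).rank := rank_mul_le_left _ _

lemma pow_succ_mul_mul_eq_of_mul_mul_eq {R : Type*} [Semiring R] {m n : Type*} [Fintype m]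
    [Fintype n] [DecidableEq n] (X : Matrix n m R) {B : Matrix m n R} {Q : Matrix n m R}
    (hQ : B * Q * B = B) (j : ℕ) : (X * B) ^ (j + 1) * Q * B = (X * B) ^ (j + 1) := by
  rw [pow_succ, Matrix.mul_assoc, Matrix.mul_assoc, Matrix.mul_assoc X, ← Matrix.mul_assoc B,
    hQ, ← Matrix.mul_assoc]

lemma exists_rank_pow_eq_rank_pow_succ {R : Type*} [CommSemiring R] [StrongRankCondition R]
    {n : Type*} [Fintype n] [DecidableEq n] (M : Matrix n n R) :
    ∃ j, (M ^ j).rank = (M ^ (j + 1)).rank := by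
  obtain ⟨j, hj : (M ^ j).rank = _⟩ := Nat.sInf_mem (Set.range_nonempty fun j ↦ (M ^ j).rank)
  refine ⟨j, le_antisymm ?_ (pow_succ M j ▸ rank_mul_le_left _ _)⟩
  exact hj ▸ Nat.sInf_le ⟨j + 1, rfl⟩

lemma rank_pow_matIndex_eq {p : ℕ} (M : Matrix (Fin p) (Fin p) ℂ) :
    (M ^ matIndex M).rank = (M ^ (matIndex M + 1)).rank :=
  Nat.sInf_mem (exists_rank_pow_eq_rank_pow_succ M)

lemma mul_mul_mul_mul_eq_iff_pow_succ_mul_eq {R : Type*} [Semiring R] {m n c : Type*}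
    [Fintype m] [Fintype n] [DecidableEq m] [DecidableEq n] {B : Matrix m n R}
    {W : Matrix n m R} {G : Matrix n n R} {Z : Matrix m n R} {k : ℕ}
    (hZ : W * (B * W) ^ (k + 1) * Z = (W * B) ^ k) (hZG : Z * (G * (W * B) ^ k) = Z)
    (X Y : Matrix n c R) :
    W * Z * W * B * X = W * Z * W * B * Y ↔ (W * B) ^ (k + 1) * X = (W * B) ^ (k + 1) * Y := by
  have factor (X : Matrix n c R) : W * Z * W * B * X = W * Z * G * ((W * B) ^ (k + 1) * X) := by
    conv_lhs => rw [← hZG]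
    simp only [pow_succ, Matrix.mul_assoc]
  have recover (X : Matrix n c R) :
      W * (B * W) ^ k * B * (W * Z * W * B * X) = (W * B) ^ (k + 1) * X :=
    calc _ = W * (B * W) ^ (k + 1) * Z * (W * B * X) := by simp only [pow_succ, Matrix.mul_assoc]
      _ = _ := by rw [hZ, pow_succ, Matrix.mul_assoc ((W * B) ^ k)]
  exact ⟨fun h ↦ by rw [← recover X, ← recover Y, h], fun h ↦ by rw [factor, factor, h]⟩

section NullSpace

variable {a b c d : ℕ}

lemma finrank_nullSpace_add_rank (M : Matrix (Fin a) (Fin b) ℂ) :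
    M.rank + Module.finrank ℂ (nullSpace M) = b :=
  (LinearMap.finrank_range_add_finrank_ker M.mulVecLin).trans (Module.finrank_fin_fun ℂ)

lemma nullSpace_le_nullSpace_mul (X : Matrix (Fin c) (Fin a) ℂ) (M : Matrix (Fin a) (Fin b) ℂ) :
    nullSpace M ≤ nullSpace (X * M) := by
  rw [nullSpace, nullSpace, mulVecLin_mul]
  exact LinearMap.ker_le_ker_comp _ _

lemma nullSpace_eq_of_le_of_rank_le {M : Matrix (Fin a) (Fin c) ℂ} {N : Matrix (Fin b) (Fin c) ℂ}
    (hle : nullSpace M ≤ nullSpace N) (hr : M.rank ≤ N.rank) : nullSpace M = nullSpace N := by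
  refine Submodule.eq_of_le_of_finrank_le hle ?_
  have := finrank_nullSpace_add_rank M
  have := finrank_nullSpace_add_rank N
  omega

lemma nullSpace_eq_of_mul_eq_of_rank_le {X : Matrix (Fin a) (Fin b) ℂ}
    {Y : Matrix (Fin b) (Fin c) ℂ} {M : Matrix (Fin a) (Fin c) ℂ} (h : X * Y = M)
    (hr : Y.rank ≤ M.rank) : nullSpace Y = nullSpace M :=
  nullSpace_eq_of_le_of_rank_le (h ▸ nullSpace_le_nullSpace_mul X Y) hr

lemma mul_eq_zero_of_nullSpace_le {M : Matrix (Fin a) (Fin b) ℂ} {X : Matrix (Fin c) (Fin b) ℂ}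
    {Y : Matrix (Fin b) (Fin d) ℂ} (hle : nullSpace M ≤ nullSpace X) (h : M * Y = 0) :
    X * Y = 0 := by
  have hY : LinearMap.range Y.mulVecLin ≤ nullSpace M := by
    rw [nullSpace, LinearMap.range_le_ker_iff, ← mulVecLin_mul, h, mulVecLin_zero]
  have := LinearMap.range_le_ker_iff.mp (hY.trans hle)
  rwa [← mulVecLin_mul, ← toLin'_apply', LinearEquiv.map_eq_zero_iff] at this

lemma mul_eq_self_of_nullSpace_le {M : Matrix (Fin a) (Fin b) ℂ} {X : Matrix (Fin c) (Fin b) ℂ}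
    {P : Matrix (Fin b) (Fin b) ℂ} (hP : M * P = M) (hle : nullSpace M ≤ nullSpace X) :
    X * P = X := by
  have := mul_eq_zero_of_nullSpace_le (Y := P - 1) hle
    (by rw [Matrix.mul_sub, hP, Matrix.mul_one, sub_self])
  rwa [Matrix.mul_sub, Matrix.mul_one, sub_eq_zero] at this

lemma mul_eq_mul_of_nullSpace_le {P : Matrix (Fin a) (Fin b) ℂ} {Q H : Matrix (Fin b) (Fin c) ℂ}
    {B : Matrix (Fin c) (Fin b) ℂ} (hQ : P * Q * B = P) (hH : H * B * H = H)
    (hle : nullSpace H ≤ nullSpace (P * Q)) : P * Q = P * H :=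
  calc P * Q = P * Q * (B * H) :=
        (mul_eq_self_of_nullSpace_le (by rw [← Matrix.mul_assoc, hH]) hle).symm
    _ = P * H := by rw [← Matrix.mul_assoc, hQ]

lemma mul_eq_mul_iff_exists_eq_add_one_sub_mul {X : Matrix (Fin a) (Fin c) ℂ}
    {M : Matrix (Fin c) (Fin b) ℂ} {P : Matrix (Fin a) (Fin b) ℂ} {G : Matrix (Fin b) (Fin c) ℂ}
    (hP : X * M = P) (hle : nullSpace P ≤ nullSpace M) (hG : M * G * M = M)
    (Q H : Matrix (Fin b) (Fin d) ℂ) :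
    P * Q = P * H ↔ ∃ U : Matrix (Fin b) (Fin d) ℂ, Q = H + (1 - G * M) * U := by
  constructor
  · intro h
    have hM : M * (Q - H) = 0 :=
      mul_eq_zero_of_nullSpace_le hle (by rw [Matrix.mul_sub, h, sub_self])
    refine ⟨Q - H, ?_⟩
    rw [Matrix.sub_mul, Matrix.one_mul, Matrix.mul_assoc G, hM, Matrix.mul_zero, sub_zero,
      add_sub_cancel]
  · rintro ⟨U, rfl⟩
    have hPG : P * (1 - G * M) = 0 := by
      rw [← hP, Matrix.mul_sub, Matrix.mul_one, Matrix.mul_assoc, ← Matrix.mul_assoc M, hG,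
        sub_self]
    rw [Matrix.mul_add, ← Matrix.mul_assoc, hPG, Matrix.zero_mul, add_zero]

end NullSpace

theorem weighted_weak_DMP_inner_inverse_general {m n : ℕ}
    (B : Matrix (Fin m) (Fin n) ℂ) (W : Matrix (Fin n) (Fin m) ℂ)
    (k : ℕ) (hk : k = matIndex (W * B))
    (H : Matrix (Fin n) (Fin m) ℂ)
    (hH1 : B * H * B = B) (hH2 : H * B * H = H)
    (G : Matrix (Fin n) (Fin n) ℂ)
    (hG1 : (W * B) ^ k * G * (W * B) ^ k = (W * B) ^ k)
    (Z : Matrix (Fin m) (Fin n) ℂ)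
    (hZ1 : W * (B * W) ^ (k + 1) * Z = (W * B) ^ k)
    (hZ2 : Z.rank = ((W * B) ^ k).rank)
    (Q : Matrix (Fin n) (Fin m) ℂ) (hQ : B * Q * B = B) :
    [ W * Z * W * B * H = W * Z * W * B * Q,
      (W * B) ^ (k + 1) * Q = (W * B) ^ (k + 1) * H,
      nullSpace ((W * B) ^ (k + 1) * Q) = nullSpace ((W * B) ^ (k + 1) * H),
      nullSpace ((W * B) ^ (k + 1) * Q) ≤ nullSpace ((W * B) ^ (k + 1) * H),
      ∃ U : Matrix (Fin n) (Fin m) ℂ, Q = H + (1 - G * (W * B) ^ k) * U ].TFAE := by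
  have hrank : ((W * B) ^ k).rank = ((W * B) ^ (k + 1)).rank := hk ▸ rank_pow_matIndex_eq (W * B)
  have hnullZ : nullSpace Z = nullSpace ((W * B) ^ k) :=
    nullSpace_eq_of_mul_eq_of_rank_le hZ1 hZ2.le
  have hnullPow : nullSpace ((W * B) ^ k) = nullSpace ((W * B) ^ (k + 1)) :=
    nullSpace_eq_of_mul_eq_of_rank_le (pow_succ' _ _).symm hrank.le
  have hZG : Z * (G * (W * B) ^ k) = Z :=
    mul_eq_self_of_nullSpace_le (by rw [← Matrix.mul_assoc, hG1]) hnullZ.ge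
  have hQB := pow_succ_mul_mul_eq_of_mul_mul_eq W hQ k
  have hHB := pow_succ_mul_mul_eq_of_mul_mul_eq W hH1 k
  tfae_have 1 ↔ 2 := (mul_mul_mul_mul_eq_iff_pow_succ_mul_eq hZ1 hZG H Q).trans eq_comm
  tfae_have 2 → 3 := fun h ↦ by rw [h]
  tfae_have 3 → 4 := le_of_eq
  tfae_have 4 → 3 := fun h ↦ nullSpace_eq_of_le_of_rank_le h <| by
    rw [rank_mul_eq_of_mul_mul_eq hQB, rank_mul_eq_of_mul_mul_eq hHB]
  tfae_have 3 → 2 := fun h ↦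
    mul_eq_mul_of_nullSpace_le hQB hH2 (h ▸ nullSpace_le_nullSpace_mul _ H)
  tfae_have 2 ↔ 5 :=
    mul_eq_mul_iff_exists_eq_add_one_sub_mul (pow_succ' _ _).symm hnullPow.ge hG1 Q H
  tfae_finish

/-- **Lemma 3.13.** Characterization of the inner inverses `Q` of `B` for which
`W·Z·W·B·Q` is the W-weighted weak DMP inverse. -/
theorem weighted_weak_DMP_inner_inverse {m n : ℕ}
    (B : Matrix (Fin m) (Fin n) ℂ) (W : Matrix (Fin n) (Fin m) ℂ)
    (k : ℕ) (hk : k = matIndex (W * B))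
    (H : Matrix (Fin n) (Fin m) ℂ)
    (hH1 : B * H * B = B) (hH2 : H * B * H = H)
    (hH3 : (B * H)ᴴ = B * H) (hH4 : (H * B)ᴴ = H * B)
    (G : Matrix (Fin n) (Fin n) ℂ)
    (hG1 : (W * B) ^ k * G * (W * B) ^ k = (W * B) ^ k)
    (hG2 : G * (W * B) ^ k * G = G)
    (hG3 : ((W * B) ^ k * G)ᴴ = (W * B) ^ k * G)
    (hG4 : (G * (W * B) ^ k)ᴴ = G * (W * B) ^ k)
    (Z : Matrix (Fin m) (Fin n) ℂ)
    (hZ1 : W * (B * W) ^ (k + 1) * Z = (W * B) ^ k)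
    (hZ2 : Z.rank = ((W * B) ^ k).rank)
    (Q : Matrix (Fin n) (Fin m) ℂ) (hQ : B * Q * B = B) :
    [ W * Z * W * B * H = W * Z * W * B * Q,
      (W * B) ^ (k + 1) * Q = (W * B) ^ (k + 1) * H,
      nullSpace ((W * B) ^ (k + 1) * Q) = nullSpace ((W * B) ^ (k + 1) * H),
      nullSpace ((W * B) ^ (k + 1) * Q) ≤ nullSpace ((W * B) ^ (k + 1) * H),
      ∃ U : Matrix (Fin n) (Fin m) ℂ, Q = H + (1 - G * (W * B) ^ k) * U ].TFAE :=
  weighted_weak_DMP_inner_inverse_general B W k hk H hH1 hH2 G hG1 Z hZ1 hZ2 Q hQ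
end

section
/- Let A, B, C ∈ ℂ^{m×n} and W ∈ ℂ^{n×m} such that A·W, B·W and C·W pairwise commute, and let k be a natural number with k = max{ind(AW), ind(BW), ind(CW), ind(AWBWCW)}. Suppose Y₄, Z₃, U₁ ∈ ℂ^{m×n} are minimal rank W-weighted weak Drazin inverses of B, A and C respectively (so Y₄·W·(B·W)^{k+1} = (B·W)^k with rank(Y₄) = rank((B·W)^k), Z₃·W·(A·W)^{k+1} = (A·W)^k with rank(Z₃) = rank((A·W)^k), and U₁·W·(C·W)^{k+1} = (C·W)^k with rank(U₁) = rank((C·W)^k)), and that (Y₄·W)·(A·W) = (A·W)·(Y₄·W) and (U₁·W)·(A·W·B·W) = (A·W·B·W)·(U₁·W). Then U₁·W·Y₄·W·Z₃ is a minimal rank W-weighted weak Drazin inverse of A·W·B·W·C, i.e. (U₁·W·Y₄·W·Z₃)·W·(A·W·B·W·C·W)^{k+1} = (A·W·B·W·C·W)^k and rank(U₁·W·Y₄·W·Z₃) = rank((A·W·B·W·C·W)^k). -/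
open Matrix

/-!
With `p = A W`, `q = B W`, `r = C W` and `a = Z₃ W`, `b = Y₄ W`, `c = U₁ W`, the defining
equation is a computation in the monoid of square matrices: `(p q r)^(k+1)` splits as
`p^(k+1) q^(k+1) r^(k+1)`, and `a`, `b`, `c` each absorb one power, moving past the other factors
by the commutation hypotheses. For the rank condition, when `X N = M` the equality
`rank X = rank M` says that `X` and `M` have the same column space, i.e. `X = M S` for some `S`.
The factorizations `Z₃ = p^k S`, `Y₄ = q^k T`, `U₁ = r^k V` then give
`U₁ W Y₄ W Z₃ = (p q r)^k (V W T W S)`.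
-/

theorem Matrix.exists_eq_mul_of_range_mulVecLin_le {R : Type*} [CommSemiring R]
    {l m n : Type*} [Fintype m] [DecidableEq m] [Fintype n]
    {P : Matrix l m R} {Q : Matrix l n R}
    (h : LinearMap.range P.mulVecLin ≤ LinearMap.range Q.mulVecLin) :
    ∃ S : Matrix n m R, P = Q * S := by
  choose v hv using fun j : m => h ⟨Pi.single j 1, rfl⟩
  refine ⟨(of v)ᵀ, ext fun i j => ?_⟩
  have hij := congrFun (hv j) i
  rw [mulVecLin_apply, mulVecLin_apply, mulVec_single_one] at hij
  exact hij.symm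

theorem Matrix.rank_eq_iff_exists_eq_mul {K : Type*} [Field K]
    {m n p : Type*} [Fintype m] [Fintype n] [DecidableEq n] [Fintype p]
    {X : Matrix m n K} {N : Matrix n p K} {M : Matrix m p K} (hM : X * N = M) :
    X.rank = M.rank ↔ ∃ S : Matrix p n K, X = M * S := by
  constructor
  · intro hr
    have hle : LinearMap.range M.mulVecLin ≤ LinearMap.range X.mulVecLin := by
      rw [← hM, mulVecLin_mul]
      exact LinearMap.range_comp_le_range _ _
    exact exists_eq_mul_of_range_mulVecLin_le (Submodule.eq_of_le_of_finrank_le hle hr.le).ge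
  · rintro ⟨S, hS⟩
    refine (hS ▸ rank_mul_le_left M S).antisymm ?_
    rw [← hM]
    exact rank_mul_le_left X N

theorem mul_mul_mul_pow_succ_eq_pow {M : Type*} [Monoid M] {p q r a b c : M} {k : ℕ}
    (hpq : Commute p q) (hpr : Commute p r) (hqr : Commute q r)
    (hbp : Commute b p) (hcpq : Commute c (p * q))
    (ha : a * p ^ (k + 1) = p ^ k) (hb : b * q ^ (k + 1) = q ^ k) (hc : c * r ^ (k + 1) = r ^ k) :
    c * b * a * (p * q * r) ^ (k + 1) = (p * q * r) ^ k := by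
  simp only [(hpr.mul_left hqr).mul_pow, hpq.mul_pow]
  calc c * b * a * (p ^ (k + 1) * q ^ (k + 1) * r ^ (k + 1))
      = c * (b * (a * p ^ (k + 1)) * q ^ (k + 1)) * r ^ (k + 1) := by simp only [mul_assoc]
    _ = c * (p ^ k * (b * q ^ (k + 1))) * r ^ (k + 1) := by
      rw [ha, (hbp.pow_right k).eq, mul_assoc (p ^ k)]
    _ = c * (p ^ k * q ^ k) * r ^ (k + 1) := by rw [hb]
    _ = p ^ k * q ^ k * r ^ k := by
      rw [← hpq.mul_pow, (hcpq.pow_right k).eq, mul_assoc, hc, hpq.mul_pow]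

theorem mul_mul_pow_eq_pow_mul {M : Type*} [Monoid M] {p q r b c t v : M} {k : ℕ}
    (hpq : Commute p q) (hpr : Commute p r) (hqr : Commute q r)
    (hbp : Commute b p) (hcpq : Commute c (p * q))
    (hb : b = q ^ k * t) (hc : c = r ^ k * v) :
    c * b * p ^ k = (p * q * r) ^ k * (v * t) := by
  calc c * b * p ^ k = c * (p * q) ^ k * t := by
        rw [mul_assoc c, (hbp.pow_right k).eq, hb, hpq.mul_pow, mul_assoc, mul_assoc]
    _ = (p * q * r) ^ k * (v * t) := by
        rw [(hcpq.pow_right k).eq, hc, (hpr.mul_left hqr).mul_pow]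
        simp only [mul_assoc]

def IsMinRankWeightedWeakDrazinInv {K : Type*} [Field K] {m n : Type*} [Fintype m]
    [DecidableEq m] [Fintype n] (B : Matrix m n K) (W : Matrix n m K) (k : ℕ)
    (X : Matrix m n K) : Prop :=
  X * W * (B * W) ^ (k + 1) = (B * W) ^ k ∧ X.rank = ((B * W) ^ k).rank

namespace IsMinRankWeightedWeakDrazinInv

variable {K : Type*} [Field K] {m n : Type*} [Fintype m] [DecidableEq m] [Fintype n]
  [DecidableEq n] {W : Matrix n m K} {k : ℕ}

theorem iff_exists_eq_pow_mul {B X : Matrix m n K} :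
    IsMinRankWeightedWeakDrazinInv B W k X ↔
      X * W * (B * W) ^ (k + 1) = (B * W) ^ k ∧ ∃ S : Matrix m n K, X = (B * W) ^ k * S := by
  refine and_congr_right fun h => rank_eq_iff_exists_eq_mul (N := W * (B * W) ^ (k + 1)) ?_
  rw [← Matrix.mul_assoc, h]

theorem triple_reverse_order {A B C Y Z U : Matrix m n K}
    (hAB : Commute (A * W) (B * W)) (hAC : Commute (A * W) (C * W))
    (hBC : Commute (B * W) (C * W))
    (hZ : IsMinRankWeightedWeakDrazinInv A W k Z) (hY : IsMinRankWeightedWeakDrazinInv B W k Y)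
    (hU : IsMinRankWeightedWeakDrazinInv C W k U)
    (hYA : Commute (Y * W) (A * W)) (hUAB : Commute (U * W) (A * W * B * W)) :
    IsMinRankWeightedWeakDrazinInv (A * W * B * W * C) W k (U * W * Y * W * Z) := by
  rw [iff_exists_eq_pow_mul] at hZ hY hU ⊢
  obtain ⟨hZ, S, hS⟩ := hZ
  obtain ⟨hY, T, hT⟩ := hY
  obtain ⟨hU, V, hV⟩ := hU
  have hUAB' : Commute (U * W) ((A * W) * (B * W)) := by
    simpa only [Matrix.mul_assoc] using hUAB
  refine ⟨?_, V * W * (T * W) * S, ?_⟩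
  · simpa only [Matrix.mul_assoc] using
      mul_mul_mul_pow_succ_eq_pow hAB hAC hBC hYA hUAB' hZ hY hU
  · have hUYA := mul_mul_pow_eq_pow_mul hAB hAC hBC hYA hUAB' (k := k)
      (by rw [hT, Matrix.mul_assoc]) (by rw [hV, Matrix.mul_assoc])
    calc U * W * Y * W * Z = U * W * (Y * W) * (A * W) ^ k * S := by
          rw [hS]; simp only [Matrix.mul_assoc]
      _ = (A * W * B * W * C * W) ^ k * (V * W * (T * W) * S) := by
          rw [hUYA]; simp only [Matrix.mul_assoc]

end IsMinRankWeightedWeakDrazinInv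

theorem minimal_rank_weighted_weak_Drazin_triple_reverse_order_general {m n : ℕ}
    (A B C : Matrix (Fin m) (Fin n) ℂ) (W : Matrix (Fin n) (Fin m) ℂ)
    (hAB : (A * W) * (B * W) = (B * W) * (A * W))
    (hAC : (A * W) * (C * W) = (C * W) * (A * W))
    (hBC : (B * W) * (C * W) = (C * W) * (B * W))
    (k : ℕ)
    (Y₄ : Matrix (Fin m) (Fin n) ℂ)
    (hY₄1 : Y₄ * W * (B * W) ^ (k + 1) = (B * W) ^ k)
    (hY₄2 : Y₄.rank = ((B * W) ^ k).rank)
    (Z₃ : Matrix (Fin m) (Fin n) ℂ)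
    (hZ₃1 : Z₃ * W * (A * W) ^ (k + 1) = (A * W) ^ k)
    (hZ₃2 : Z₃.rank = ((A * W) ^ k).rank)
    (U₁ : Matrix (Fin m) (Fin n) ℂ)
    (hU₁1 : U₁ * W * (C * W) ^ (k + 1) = (C * W) ^ k)
    (hU₁2 : U₁.rank = ((C * W) ^ k).rank)
    (hYA : (Y₄ * W) * (A * W) = (A * W) * (Y₄ * W))
    (hUAB : (U₁ * W) * (A * W * B * W) = (A * W * B * W) * (U₁ * W)) :
    (U₁ * W * Y₄ * W * Z₃) * W * (A * W * B * W * C * W) ^ (k + 1) =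
      (A * W * B * W * C * W) ^ k ∧
    (U₁ * W * Y₄ * W * Z₃).rank = ((A * W * B * W * C * W) ^ k).rank :=
  IsMinRankWeightedWeakDrazinInv.triple_reverse_order hAB hAC hBC ⟨hZ₃1, hZ₃2⟩ ⟨hY₄1, hY₄2⟩
    ⟨hU₁1, hU₁2⟩ hYA hUAB

/-- **Theorem 3.31.** Triple reverse order law for the minimal rank W-weighted weak
Drazin inverse: `U₁·W·Y₄·W·Z₃` is a minimal rank W-weighted weak Drazin inverse of
`A·W·B·W·C`. -/
theorem minimal_rank_weighted_weak_Drazin_triple_reverse_order {m n : ℕ}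
    (A B C : Matrix (Fin m) (Fin n) ℂ) (W : Matrix (Fin n) (Fin m) ℂ)
    (hAB : (A * W) * (B * W) = (B * W) * (A * W))
    (hAC : (A * W) * (C * W) = (C * W) * (A * W))
    (hBC : (B * W) * (C * W) = (C * W) * (B * W))
    (k : ℕ)
    (hk : k = max (max (max (matIndex (A * W)) (matIndex (B * W))) (matIndex (C * W)))
          (matIndex (A * W * B * W * C * W)))
    (Y₄ : Matrix (Fin m) (Fin n) ℂ)
    (hY₄1 : Y₄ * W * (B * W) ^ (k + 1) = (B * W) ^ k)
    (hY₄2 : Y₄.rank = ((B * W) ^ k).rank)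
    (Z₃ : Matrix (Fin m) (Fin n) ℂ)
    (hZ₃1 : Z₃ * W * (A * W) ^ (k + 1) = (A * W) ^ k)
    (hZ₃2 : Z₃.rank = ((A * W) ^ k).rank)
    (U₁ : Matrix (Fin m) (Fin n) ℂ)
    (hU₁1 : U₁ * W * (C * W) ^ (k + 1) = (C * W) ^ k)
    (hU₁2 : U₁.rank = ((C * W) ^ k).rank)
    (hYA : (Y₄ * W) * (A * W) = (A * W) * (Y₄ * W))
    (hUAB : (U₁ * W) * (A * W * B * W) = (A * W * B * W) * (U₁ * W)) :
    (U₁ * W * Y₄ * W * Z₃) * W * (A * W * B * W * C * W) ^ (k + 1) =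
      (A * W * B * W * C * W) ^ k ∧
    (U₁ * W * Y₄ * W * Z₃).rank = ((A * W * B * W * C * W) ^ k).rank :=
  minimal_rank_weighted_weak_Drazin_triple_reverse_order_general A B C W hAB hAC hBC k Y₄ hY₄1 hY₄2
    Z₃ hZ₃1 hZ₃2 U₁ hU₁1 hU₁2 hYA hUAB
end
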